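/- arXiv:0811.4180 — 5 statements merged into one kernel-verified Lean document; each statement's English description precedes it below -/
import Mathlib

section
/- Let Y be a finite set of 240 unit vectors in ℝ^35 that is antipodal (i.e., y ∈ Y implies −y ∈ Y). Then there exist y, y' ∈ Y with y ≠ y' and y ≠ −y' such that |⟨y, y'⟩| ≥ 1/7. -/
open RealInnerProductSpace

private lemma sum_sq_rearrange (s : Finset (EuclideanSpace ℝ (Fin 35))) :
    ∑ x ∈ s, ∑ y ∈ s, (∑ a, x a * y a)^2
      = ∑ a : Fin 35, ∑ b : Fin 35, (∑ x ∈ s, x a * x b)^2 := by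
  simp only [sq, Finset.sum_mul_sum]
  conv_lhs => enter [2, x]; rw [Finset.sum_comm]
  rw [Finset.sum_comm]
  conv_lhs => enter [2, a, 2, x]; rw [Finset.sum_comm]
  conv_lhs => enter [2, a]; rw [Finset.sum_comm]
  refine Finset.sum_congr rfl fun a _ => Finset.sum_congr rfl fun b _ => ?_
  refine Finset.sum_congr rfl fun x _ => Finset.sum_congr rfl fun y _ => ?_
  ring

theorem exists_large_inner_of_antipodal_240 (Y : Finset (EuclideanSpace ℝ (Fin 35)))
    (hcard : Y.card = 240) (hunit : ∀ y ∈ Y, ‖y‖ = 1)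
    (hanti : ∀ y ∈ Y, -y ∈ Y) :
    ∃ y ∈ Y, ∃ y' ∈ Y, y ≠ y' ∧ y ≠ -y' ∧ (1 : ℝ) / 7 ≤ |⟪y, y'⟫| := by
  classical
  by_contra hcon
  push_neg at hcon
  have hinner : ∀ x z : EuclideanSpace ℝ (Fin 35), ⟪x, z⟫ = ∑ a, x a * z a := by
    intro x z
    simp [PiLp.inner_apply, RCLike.inner_apply, mul_comm]
  have hself : ∀ y ∈ Y, ⟪y, y⟫ = (1:ℝ) := by
    intro y hy
    rw [real_inner_self_eq_norm_sq, hunit y hy]; norm_num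
  have hne0 : ∀ y ∈ Y, y ≠ 0 := by
    intro y hy h
    have := hunit y hy
    rw [h] at this; simp at this
  have hnegne : ∀ y ∈ Y, -y ≠ y := by
    intro y hy h
    apply hne0 y hy
    have h2 : y + y = 0 := by
      nth_rewrite 1 [← h]; simp
    have : (2:ℝ) • y = 0 := by
      rw [two_smul]; exact h2
    simpa using (smul_eq_zero.mp this).resolve_left (by norm_num)
  set S : ℝ := ∑ y ∈ Y, ∑ y' ∈ Y, ⟪y, y'⟫^2 with hS
  -- Lower bound
  have hlow : (240:ℝ)^2 ≤ 35 * S := by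
    have h1 : S = ∑ a : Fin 35, ∑ b : Fin 35, (∑ y ∈ Y, y a * y b)^2 := by
      rw [hS, ← sum_sq_rearrange]
      exact Finset.sum_congr rfl fun y _ => Finset.sum_congr rfl fun y' _ => by rw [hinner]
    have htr : ∑ a : Fin 35, (∑ y ∈ Y, y a * y a) = 240 := by
      rw [Finset.sum_comm]
      have : ∀ y ∈ Y, ∑ a : Fin 35, y a * y a = 1 := by
        intro y hy
        rw [← hinner y y, hself y hy]
      rw [Finset.sum_congr rfl this, Finset.sum_const, hcard]
      norm_num
    have hcs : (∑ a : Fin 35, (∑ y ∈ Y, y a * y a))^2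
        ≤ 35 * ∑ a : Fin 35, (∑ y ∈ Y, y a * y a)^2 := by
      have := sq_sum_le_card_mul_sum_sq
        (s := (Finset.univ : Finset (Fin 35))) (f := fun a => ∑ y ∈ Y, y a * y a)
      simpa using this
    have hdiag : ∑ a : Fin 35, (∑ y ∈ Y, y a * y a)^2
        ≤ ∑ a : Fin 35, ∑ b : Fin 35, (∑ y ∈ Y, y a * y b)^2 := by
      refine Finset.sum_le_sum fun a _ => ?_
      exact Finset.single_le_sum (f := fun b => (∑ y ∈ Y, y a * y b)^2)
        (fun b _ => sq_nonneg _) (Finset.mem_univ a)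
    rw [h1]
    calc (240:ℝ)^2 = (∑ a : Fin 35, (∑ y ∈ Y, y a * y a))^2 := by rw [htr]
      _ ≤ 35 * ∑ a : Fin 35, (∑ y ∈ Y, y a * y a)^2 := hcs
      _ ≤ 35 * ∑ a : Fin 35, ∑ b : Fin 35, (∑ y ∈ Y, y a * y b)^2 := by
          linarith [hdiag]
  -- Upper bound
  have hup : S < 240 * (2 + 238 * (1/49)) := by
    have hrow : ∀ y ∈ Y, ∑ y' ∈ Y, ⟪y, y'⟫^2 < 2 + 238 * (1/49) := by
      intro y hy
      have hmy : -y ∈ Y := hanti y hy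
      have hmy' : -y ∈ Y.erase y := Finset.mem_erase.mpr ⟨hnegne y hy, hmy⟩
      have hsplit1 : ∑ y' ∈ Y, ⟪y, y'⟫^2
          = ⟪y, y⟫^2 + ∑ y' ∈ Y.erase y, ⟪y, y'⟫^2 :=
        (Finset.add_sum_erase Y _ hy).symm
      have hsplit2 : ∑ y' ∈ Y.erase y, ⟪y, y'⟫^2
          = ⟪y, -y⟫^2 + ∑ y' ∈ (Y.erase y).erase (-y), ⟪y, y'⟫^2 :=
        (Finset.add_sum_erase _ _ hmy').symm
      have hc : ((Y.erase y).erase (-y)).card = 238 := by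
        rw [Finset.card_erase_of_mem hmy', Finset.card_erase_of_mem hy, hcard]
      have hrest : ∑ y' ∈ (Y.erase y).erase (-y), ⟪y, y'⟫^2
          < ∑ _y' ∈ (Y.erase y).erase (-y), (1/49 : ℝ) := by
        refine Finset.sum_lt_sum_of_nonempty ?_ ?_
        · rw [← Finset.card_pos, hc]; norm_num
        · intro y' hy'
          obtain ⟨hy'ne_my, hy'mem⟩ := Finset.mem_erase.mp hy'
          obtain ⟨hy'ne_y, hy'Y⟩ := Finset.mem_erase.mp hy'mem
          have hne1 : y ≠ y' := fun h => hy'ne_y h.symm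
          have hne2 : y ≠ -y' := by
            intro h
            apply hy'ne_my
            rw [h]; simp
          have habs := hcon y hy y' hy'Y hne1 hne2
          have h0 := abs_nonneg ⟪y, y'⟫
          nlinarith [sq_abs ⟪y, y'⟫]
      have hsum : ∑ _y' ∈ (Y.erase y).erase (-y), (1/49 : ℝ) = 238 * (1/49) := by
        rw [Finset.sum_const, hc]; norm_num
      have hinn : ⟪y, -y⟫^2 = 1 := by
        rw [inner_neg_right, hself y hy]; norm_num
      rw [hsplit1, hsplit2, hself y hy, hinn]
      rw [hsum] at hrest
      linarith
    calc S < ∑ _y ∈ Y, (2 + 238 * (1/49) : ℝ) := by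
          refine Finset.sum_lt_sum_of_nonempty ?_ hrow
          rw [← Finset.card_pos, hcard]; norm_num
      _ = 240 * (2 + 238 * (1/49)) := by rw [Finset.sum_const, hcard]; norm_num
  -- contradiction: 240^2/35 = 11520/7 = 240*(2+238/49)
  nlinarith [hlow, hup]
end

section
/- There exists a set X of 240 unit vectors in ℝ^8 such that X is closed under negation (x ∈ X implies −x ∈ X) and for any two distinct non-antipodal x, x' ∈ X (i.e., x ≠ x' and x ≠ −x') the inner product ⟨x, x'⟩ belongs to {0, 1/2, −1/2}. -/
/-!
Take the 240 roots of `E₈` in doubled coordinates: the vectors `2(±eᵢ ± eⱼ)` and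
`(±1, …, ±1)` with an even number of minus signs, scaled by `1/√8` to unit length. They lie in
the lattice of integer vectors whose coordinates share a parity and sum to a multiple of 4. On
that lattice `w ⬝ᵥ w ≡ 0 [ZMOD 8]`, hence by polarization `v ⬝ᵥ w ≡ 0 [ZMOD 4]`, so inner
products of the unit vectors lie in `½ℤ`. Cauchy–Schwarz, with its equality cases excluded by
`x ≠ x'` and `x ≠ -x'`, leaves only `0` and `±½`.
-/

open RealInnerProductSpace Finset

theorem Int.eight_dvd_sq_sub_two_mul_of_even {a : ℤ} (ha : Even a) : 8 ∣ a ^ 2 - 2 * a := by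
  obtain ⟨u, rfl⟩ := ha
  obtain ⟨v, hv⟩ := Int.even_mul_pred_self u
  exact ⟨v, by linear_combination 4 * hv⟩

/-- `2 • E₈`, the `E₈` lattice in doubled coordinates. -/
def e8Lattice : AddSubgroup (Fin 8 → ℤ) where
  carrier := {w | (∀ i j, w i ≡ w j [ZMOD 2]) ∧ ∑ i, w i ≡ 0 [ZMOD 4]}
  add_mem' := fun ⟨hv, hv'⟩ ⟨hw, hw'⟩ =>
    ⟨fun i j => (hv i j).add (hw i j), by simpa [sum_add_distrib] using hv'.add hw'⟩
  zero_mem' := by simp [Int.ModEq.refl]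
  neg_mem' := fun ⟨hw, hw'⟩ => ⟨fun i j => (hw i j).neg, by simpa using hw'.neg⟩

theorem mem_e8Lattice {w : Fin 8 → ℤ} :
    w ∈ e8Lattice ↔ (∀ i j, w i ≡ w j [ZMOD 2]) ∧ ∑ i, w i ≡ 0 [ZMOD 4] := Iff.rfl

instance : DecidablePred (· ∈ e8Lattice) := fun _ => decidable_of_iff _ mem_e8Lattice.symm

theorem eight_dvd_dotProduct_self_of_mem_e8Lattice {w : Fin 8 → ℤ} (hw : w ∈ e8Lattice) :
    8 ∣ w ⬝ᵥ w := by
  obtain ⟨hpar, hsum⟩ := hw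
  have hdot : w ⬝ᵥ w = ∑ i, w i ^ 2 := by simp [dotProduct, sq]
  rcases Int.even_or_odd (w 0) with h0 | h0
  · have hcoord (i : Fin 8) : Even (w i) := by
      rw [Int.even_iff] at h0 ⊢; exact Eq.trans (hpar i 0) h0
    have : w ⬝ᵥ w = ∑ i, (w i ^ 2 - 2 * w i) + 2 * ∑ i, w i := by
      rw [hdot, sum_sub_distrib, ← mul_sum]; ring
    rw [this]
    refine dvd_add (dvd_sum fun i _ => Int.eight_dvd_sq_sub_two_mul_of_even (hcoord i)) ?_
    exact mul_dvd_mul_left (2 : ℤ) (Int.modEq_zero_iff_dvd.1 hsum)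
  · have hcoord (i : Fin 8) : Odd (w i) := by
      rw [Int.odd_iff] at h0 ⊢; exact Eq.trans (hpar i 0) h0
    have : w ⬝ᵥ w = ∑ i, (w i ^ 2 - 1) + 8 := by simp [hdot, sum_sub_distrib]
    rw [this]
    exact dvd_add (dvd_sum fun i _ => Int.eight_dvd_sq_sub_one_of_odd (hcoord i)) dvd_rfl

theorem four_dvd_dotProduct_of_mem_e8Lattice {v w : Fin 8 → ℤ} (hv : v ∈ e8Lattice)
    (hw : w ∈ e8Lattice) : 4 ∣ v ⬝ᵥ w := by
  have hvw := eight_dvd_dotProduct_self_of_mem_e8Lattice (add_mem hv hw)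
  have hvv := eight_dvd_dotProduct_self_of_mem_e8Lattice hv
  have hww := eight_dvd_dotProduct_self_of_mem_e8Lattice hw
  have : (v + w) ⬝ᵥ (v + w) = v ⬝ᵥ v + 2 * (v ⬝ᵥ w) + w ⬝ᵥ w := by
    simp only [add_dotProduct, dotProduct_add, dotProduct_comm w v]; ring
  omega

theorem inner_mem_of_two_mul_inner_eq_intCast {E : Type*} [NormedAddCommGroup E]
    [InnerProductSpace ℝ E] {x y : E} (hx : ‖x‖ = 1) (hy : ‖y‖ = 1) (hxy : x ≠ y)
    (hxy' : x ≠ -y) {m : ℤ} (hm : 2 * ⟪x, y⟫ = m) :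
    ⟪x, y⟫ ∈ ({0, 1 / 2, -(1 / 2)} : Set ℝ) := by
  have hle : |⟪x, y⟫| ≤ 1 := by simpa [hx, hy] using abs_real_inner_le_norm x y
  have hne_one : ⟪x, y⟫ ≠ 1 := mt (inner_eq_one_iff_of_norm_eq_one hx hy).1 hxy
  have hne_neg_one : ⟪x, y⟫ ≠ -1 := mt (inner_eq_neg_one_iff_of_norm_eq_one hx hy).1 hxy'
  have hm_le : |m| ≤ 2 := by
    have : |(m : ℝ)| ≤ 2 := by rw [← hm, abs_mul, abs_two]; linarith
    exact_mod_cast this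
  have hm_ne_two : m ≠ 2 := by rintro rfl; apply hne_one; push_cast at hm; linarith
  have hm_ne_neg_two : m ≠ -2 := by rintro rfl; apply hne_neg_one; push_cast at hm; linarith
  rw [show ⟪x, y⟫ = m / 2 by linarith]
  obtain rfl | rfl | rfl : m = -1 ∨ m = 0 ∨ m = 1 := by rw [abs_le] at hm_le; omega
  all_goals norm_num

section ScaledEmbedding

variable {ι : Type*}

def scaledEmbedding (c : ℝ) : (ι → ℤ) →+ EuclideanSpace ℝ ι where
  toFun w := WithLp.toLp 2 fun k => c * w k
  map_zero' := by ext; simp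
  map_add' v w := by ext; simp [mul_add]

theorem inner_scaledEmbedding [Fintype ι] (c : ℝ) (v w : ι → ℤ) :
    ⟪scaledEmbedding c v, scaledEmbedding c w⟫ = c ^ 2 * (v ⬝ᵥ w : ℤ) := by
  simp only [scaledEmbedding, AddMonoidHom.coe_mk, ZeroHom.coe_mk, PiLp.inner_apply,
    RCLike.inner_apply, Real.ringHom_apply, dotProduct, Int.cast_sum, Int.cast_mul, mul_sum]
  exact sum_congr rfl fun k _ => by ring

theorem scaledEmbedding_injective {c : ℝ} (hc : c ≠ 0) :
    Function.Injective (scaledEmbedding (ι := ι) c) := by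
  intro v w h
  funext k
  have := congrArg (fun x : EuclideanSpace ℝ ι => x k) h
  simpa [scaledEmbedding, hc] using this

theorem norm_scaledEmbedding_eq_one [Fintype ι] {c : ℝ} {w : ι → ℤ}
    (h : c ^ 2 * (w ⬝ᵥ w : ℤ) = 1) : ‖scaledEmbedding c w‖ = 1 := by
  rw [← pow_eq_one_iff_of_nonneg (norm_nonneg _) two_ne_zero, ← real_inner_self_eq_norm_sq,
    inner_scaledEmbedding, h]

end ScaledEmbedding

def e8Roots : Finset (Fin 8 → ℤ) :=
  ((univ.filter fun p : Fin 8 × Fin 8 × ℤˣ × ℤˣ => p.1 < p.2.1).image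
      fun p => Pi.single p.1 (2 * p.2.2.1 : ℤ) + Pi.single p.2.1 (2 * p.2.2.2 : ℤ)) ∪
    ((univ.filter fun s : Fin 8 → ℤˣ => ∑ k, (s k : ℤ) ≡ 0 [ZMOD 4]).image
      fun s k => (s k : ℤ))

theorem neg_mem_e8Roots {w : Fin 8 → ℤ} (hw : w ∈ e8Roots) : -w ∈ e8Roots := by
  simp only [e8Roots, mem_union, mem_image, mem_filter, mem_univ, true_and] at hw ⊢
  rcases hw with ⟨⟨i, j, s, t⟩, hij, rfl⟩ | ⟨s, hs, rfl⟩
  · exact .inl ⟨⟨i, j, -s, -t⟩, hij, by simp [Pi.single_neg, neg_add_rev, add_comm]⟩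
  · exact .inr ⟨-s, by simpa using hs.neg, by ext; simp⟩

set_option maxRecDepth 40000 in
theorem card_e8Roots : e8Roots.card = 240 := by decide +kernel

set_option maxRecDepth 40000 in
theorem mem_e8Lattice_of_mem_e8Roots : ∀ w ∈ e8Roots, w ∈ e8Lattice := by
  decide +kernel

set_option maxRecDepth 40000 in
theorem dotProduct_self_of_mem_e8Roots : ∀ w ∈ e8Roots, w ⬝ᵥ w = 8 := by
  decide +kernel

theorem exists_E8_code :
    ∃ X : Finset (EuclideanSpace ℝ (Fin 8)),
      X.card = 240 ∧
      (∀ x ∈ X, ‖x‖ = 1) ∧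
      (∀ x ∈ X, -x ∈ X) ∧
      (∀ x ∈ X, ∀ x' ∈ X, x ≠ x' → x ≠ -x' →
        ⟪x, x'⟫ ∈ ({0, 1 / 2, -(1 / 2)} : Set ℝ)) := by
  set c : ℝ := √(1 / 8)
  have hc : c ^ 2 = 1 / 8 := Real.sq_sqrt (by norm_num)
  have hunit (w : Fin 8 → ℤ) (hw : w ∈ e8Roots) : ‖scaledEmbedding c w‖ = 1 := by
    refine norm_scaledEmbedding_eq_one ?_
    rw [hc, dotProduct_self_of_mem_e8Roots w hw]
    norm_num
  refine ⟨e8Roots.image (scaledEmbedding c), ?_, ?_, ?_, ?_⟩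
  · rw [card_image_of_injective _ (scaledEmbedding_injective (by positivity)), card_e8Roots]
  · simpa using hunit
  · simp only [forall_mem_image]
    exact fun w hw => mem_image.2 ⟨-w, neg_mem_e8Roots hw, map_neg _ _⟩
  · simp only [forall_mem_image]
    intro v hv w hw hne hne'
    obtain ⟨m, hm⟩ := four_dvd_dotProduct_of_mem_e8Lattice
      (mem_e8Lattice_of_mem_e8Roots v hv) (mem_e8Lattice_of_mem_e8Roots w hw)
    refine inner_mem_of_two_mul_inner_eq_intCast (hunit v hv) (hunit w hw) hne hne' (m := m) ?_
    rw [inner_scaledEmbedding, hc, hm]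
    push_cast
    ring
end

section
/- Let X be a set of 120 unit vectors in ℝ^8 such that x ∈ X implies −x ∉ X, and such that for any distinct x, x' ∈ X the inner product ⟨x, x'⟩ lies in {0, 1/2, −1/2}. For x ∈ X put G_x = (xxᵀ − (1/8)I)/√(7/8), a unit vector in the 35-dimensional space of traceless symmetric 8×8 matrices with the Frobenius inner product. Then the 240 matrices {G_x : x ∈ X} ∪ {−G_x : x ∈ X} are pairwise distinct, the set is closed under negation, and for any two of these matrices M, M' with M ≠ M' and M ≠ −M' one has |⟨M, M'⟩_F| = 1/7. -/
/-!
For unit vectors `x, y` in `ℝ⁸` the Frobenius inner product of the normalized traceless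
projections is `⟨G_x, G_y⟩ = (8 ⟪x, y⟫² - 1) / 7`. It equals `1` for `x = y`, and `±1/7` when
`⟪x, y⟫ ∈ {0, ±1/2}`. Since `|±1/7| < 1`, the `G_x` are pairwise distinct and no `G_x` is the
negative of a `G_y`.
-/

open RealInnerProductSpace Matrix

section Gram

variable {n : Type*} [Fintype n] [DecidableEq n]

theorem trace_transpose_mul_vecMulVec_sub (x y : EuclideanSpace ℝ n) (c : ℝ) :
    ((vecMulVec x x - c • 1)ᵀ * (vecMulVec y y - c • 1)).trace
      = ⟪x, y⟫ ^ 2 - c * ‖x‖ ^ 2 - c * ‖y‖ ^ 2 + c ^ 2 * Fintype.card n := by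
  have hdot : ∀ u v : EuclideanSpace ℝ n, u.ofLp ⬝ᵥ v.ofLp = ⟪u, v⟫ := fun u v => by
    simp [EuclideanSpace.inner_eq_star_dotProduct, dotProduct_comm]
  simp only [transpose_sub, transpose_vecMulVec, transpose_smul, transpose_one, sub_mul, mul_sub,
    vecMulVec_mul_vecMulVec, Matrix.smul_mul, Matrix.mul_smul, mul_one, one_mul, smul_smul,
    trace_sub, trace_smul, trace_vecMulVec, trace_one, dotProduct_smul, smul_eq_mul]
  simp only [hdot, real_inner_self_eq_norm_sq]
  ring

theorem trace_transpose_mul_smul_vecMulVec_sub_of_norm_eq_one {x y : EuclideanSpace ℝ n}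
    (hx : ‖x‖ = 1) (hy : ‖y‖ = 1) (s : ℝ) {c : ℝ} (hc : c * Fintype.card n = 1) :
    ((s • (vecMulVec x x - c • 1))ᵀ * (s • (vecMulVec y y - c • 1))).trace
      = s ^ 2 * (⟪x, y⟫ ^ 2 - c) := by
  rw [transpose_smul, Matrix.smul_mul, Matrix.mul_smul, trace_smul, trace_smul, smul_smul,
    trace_transpose_mul_vecMulVec_sub, hx, hy, smul_eq_mul]
  linear_combination s ^ 2 * c * hc

end Gram

section AntipodalDoubling

variable {ι n : Type*} [Fintype n] {X : Finset ι} {f : ι → Matrix n n ℝ}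

theorem mem_image_union_image_neg_iff {M : Matrix n n ℝ} :
    M ∈ X.image f ∪ X.image (fun x => -f x) ↔ ∃ x ∈ X, M = f x ∨ M = -f x := by
  simp only [Finset.mem_union, Finset.mem_image]
  constructor
  · rintro (⟨x, hx, rfl⟩ | ⟨x, hx, rfl⟩)
    exacts [⟨x, hx, .inl rfl⟩, ⟨x, hx, .inr rfl⟩]
  · rintro ⟨x, hx, rfl | rfl⟩
    exacts [.inl ⟨x, hx, rfl⟩, .inr ⟨x, hx, rfl⟩]

theorem neg_mem_image_union_image_neg {M : Matrix n n ℝ}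
    (hM : M ∈ X.image f ∪ X.image (fun x => -f x)) :
    -M ∈ X.image f ∪ X.image (fun x => -f x) := by
  obtain ⟨x, hx, rfl | rfl⟩ := mem_image_union_image_neg_iff.mp hM
  exacts [mem_image_union_image_neg_iff.mpr ⟨x, hx, .inr rfl⟩,
    mem_image_union_image_neg_iff.mpr ⟨x, hx, .inl (neg_neg _)⟩]

theorem abs_trace_transpose_mul_of_mem_image_union_image_neg {c : ℝ}
    (hoff : ∀ x ∈ X, ∀ y ∈ X, x ≠ y → |((f x)ᵀ * f y).trace| = c) {M M' : Matrix n n ℝ}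
    (hM : M ∈ X.image f ∪ X.image (fun x => -f x))
    (hM' : M' ∈ X.image f ∪ X.image (fun x => -f x)) (hne : M ≠ M') (hne_neg : M ≠ -M') :
    |(Mᵀ * M').trace| = c := by
  obtain ⟨x, hx, hMx⟩ := mem_image_union_image_neg_iff.mp hM
  obtain ⟨y, hy, hMy⟩ := mem_image_union_image_neg_iff.mp hM'
  have hxy : x ≠ y := by
    rintro rfl
    rcases hMx with rfl | rfl <;> rcases hMy with rfl | rfl <;> simp_all
  rcases hMx with rfl | rfl <;> rcases hMy with rfl | rfl <;>
    simpa [Matrix.mul_neg, Matrix.neg_mul, trace_neg, abs_neg] using hoff x hx y hy hxy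

variable (hself : ∀ x ∈ X, ((f x)ᵀ * f x).trace = 1)
  (hlt : ∀ x ∈ X, ∀ y ∈ X, x ≠ y → |((f x)ᵀ * f y).trace| < 1)
include hself hlt

theorem injOn_of_abs_trace_transpose_mul_lt_one : Set.InjOn f X := by
  intro x hx y hy h
  by_contra hne
  have := hlt x hx y hy hne
  rw [← h, hself x hx, abs_one] at this
  exact lt_irrefl _ this

theorem ne_neg_of_abs_trace_transpose_mul_lt_one {x y : ι} (hx : x ∈ X) (hy : y ∈ X) :
    f x ≠ -f y := by
  intro h
  have hxy : ((f x)ᵀ * f y).trace = -1 := by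
    rw [← neg_neg (f y), ← h, Matrix.mul_neg, trace_neg, hself x hx]
  obtain rfl | hne := eq_or_ne x y
  · rw [hself x hx] at hxy
    norm_num at hxy
  · have := hlt x hx y hy hne
    rw [hxy, abs_neg, abs_one] at this
    exact lt_irrefl _ this

theorem card_image_union_image_neg_of_abs_trace_transpose_mul_lt_one :
    (X.image f ∪ X.image (fun x => -f x)).card = 2 * X.card := by
  have hinj := injOn_of_abs_trace_transpose_mul_lt_one hself hlt
  have hdisj : Disjoint (X.image f) (X.image fun x => -f x) := by
    simp only [Finset.disjoint_left, Finset.mem_image]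
    rintro _ ⟨x, hx, rfl⟩ ⟨y, hy, hxy⟩
    exact ne_neg_of_abs_trace_transpose_mul_lt_one hself hlt hx hy hxy.symm
  rw [Finset.card_union_of_disjoint hdisj, Finset.card_image_of_injOn hinj,
    Finset.card_image_of_injOn fun x hx y hy h => hinj hx hy (neg_injective h), two_mul]

end AntipodalDoubling

theorem code_construction_in_harmonics_general
    (X : Finset (EuclideanSpace ℝ (Fin 8)))
    (hcard : X.card = 120)
    (hunit : ∀ x ∈ X, ‖x‖ = 1)
    (hinner : ∀ x ∈ X, ∀ x' ∈ X, x ≠ x' → ⟪x, x'⟫ ∈ ({0, 1 / 2, -(1 / 2)} : Set ℝ))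
    (G : EuclideanSpace ℝ (Fin 8) → Matrix (Fin 8) (Fin 8) ℝ)
    (hG : ∀ x, G x = (Real.sqrt (7 / 8))⁻¹ •
      ((Matrix.of fun i j => x i * x j) - (1 / 8 : ℝ) • (1 : Matrix (Fin 8) (Fin 8) ℝ)))
    (T : Finset (Matrix (Fin 8) (Fin 8) ℝ))
    (hT : T = X.image G ∪ X.image (fun x => -G x)) :
    T.card = 240 ∧
    (∀ M ∈ T, -M ∈ T) ∧
    (∀ M ∈ T, ∀ M' ∈ T, M ≠ M' → M ≠ -M' → |(Mᵀ * M').trace| = 1 / 7) := by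
  have hscale : (Real.sqrt (7 / 8))⁻¹ ^ 2 = (8 / 7 : ℝ) := by
    rw [inv_pow, Real.sq_sqrt (by norm_num)]
    norm_num
  have gram : ∀ x ∈ X, ∀ y ∈ X, ((G x)ᵀ * G y).trace = 8 / 7 * (⟪x, y⟫ ^ 2 - 1 / 8) :=
    fun x hx y hy => by
      rw [hG, hG, ← hscale]
      exact trace_transpose_mul_smul_vecMulVec_sub_of_norm_eq_one (hunit x hx) (hunit y hy) _
        (by norm_num)
  have hself : ∀ x ∈ X, ((G x)ᵀ * G x).trace = 1 := fun x hx => by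
    rw [gram x hx x hx, real_inner_self_eq_norm_sq, hunit x hx]
    norm_num
  have hoff : ∀ x ∈ X, ∀ y ∈ X, x ≠ y → |((G x)ᵀ * G y).trace| = 1 / 7 :=
    fun x hx y hy hne => by
      rw [gram x hx y hy]
      rcases hinner x hx y hy hne with h | h | h <;> rw [h] <;> norm_num
  have hlt : ∀ x ∈ X, ∀ y ∈ X, x ≠ y → |((G x)ᵀ * G y).trace| < 1 :=
    fun x hx y hy hne => (hoff x hx y hy hne).trans_lt (by norm_num)
  subst hT
  refine ⟨?_, fun M => neg_mem_image_union_image_neg, fun M hM M' hM' =>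
    abs_trace_transpose_mul_of_mem_image_union_image_neg hoff hM hM'⟩
  rw [card_image_union_image_neg_of_abs_trace_transpose_mul_lt_one hself hlt, hcard]

theorem code_construction_in_harmonics
    (X : Finset (EuclideanSpace ℝ (Fin 8)))
    (hcard : X.card = 120)
    (hunit : ∀ x ∈ X, ‖x‖ = 1)
    (hnoanti : ∀ x ∈ X, -x ∉ X)
    (hinner : ∀ x ∈ X, ∀ x' ∈ X, x ≠ x' → ⟪x, x'⟫ ∈ ({0, 1 / 2, -(1 / 2)} : Set ℝ))
    (G : EuclideanSpace ℝ (Fin 8) → Matrix (Fin 8) (Fin 8) ℝ)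
    (hG : ∀ x, G x = (Real.sqrt (7 / 8))⁻¹ •
      ((Matrix.of fun i j => x i * x j) - (1 / 8 : ℝ) • (1 : Matrix (Fin 8) (Fin 8) ℝ)))
    (T : Finset (Matrix (Fin 8) (Fin 8) ℝ))
    (hT : T = X.image G ∪ X.image (fun x => -G x)) :
    T.card = 240 ∧
    (∀ M ∈ T, -M ∈ T) ∧
    (∀ M ∈ T, ∀ M' ∈ T, M ≠ M' → M ≠ -M' → |(Mᵀ * M').trace| = 1 / 7) :=
  code_construction_in_harmonics_general X hcard hunit hinner G hG T hT
end

section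
/- There exists a set Y of 240 unit vectors in a 35-dimensional real inner product space such that Y is closed under negation and for all y, y' ∈ Y with y ≠ y' and y ≠ −y', one has |⟨y, y'⟩| = 1/7. In particular, an antipodal spherical (35, 240, 1/7) code exists. -/
/-!
Doubled, the 240 roots of `E₈` span 120 lines whose representatives `a` have `a ⬝ᵥ a = 8` and
`a ⬝ᵥ b ∈ {0, ±4}` for distinct lines. The map `T a = a aᵀ - (‖a‖² / 8) I` takes values in the
35-dimensional space of traceless symmetric `8 × 8` matrices and satisfies
`⟪T a, T b⟫ = (a ⬝ᵥ b)² - ‖a‖² ‖b‖² / 8`, which is `56` for `a = b` and `±8` for distinct lines.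
So the normalised images are 120 unit vectors in `ℝ³⁵` with `|⟪y, y'⟫| = 1/7`, and together with
their negatives they form the code.
-/

open RealInnerProductSpace Module
open scoped Pointwise

section AntipodalCode

variable {E ι : Type*} [NormedAddCommGroup E] [InnerProductSpace ℝ E] {v : ι → E} {a : ℝ}

theorem eq_of_abs_inner_eq_one (ha : a < 1) (hinner : Pairwise fun i j => |⟪v i, v j⟫| = a)
    {i j : ι} (h : |⟪v i, v j⟫| = 1) : i = j := by
  by_contra hij
  have : |⟪v i, v j⟫| = a := hinner hij
  linarith

theorem injective_of_pairwise_abs_inner (hv : ∀ i, ‖v i‖ = 1) (ha : a < 1)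
    (hinner : Pairwise fun i j => |⟪v i, v j⟫| = a) : Function.Injective v := fun i j h =>
  eq_of_abs_inner_eq_one ha hinner (by simp [h, hv])

theorem ne_neg_of_pairwise_abs_inner (hv : ∀ i, ‖v i‖ = 1) (ha : a < 1)
    (hinner : Pairwise fun i j => |⟪v i, v j⟫| = a) (i j : ι) : v i ≠ -v j := by
  intro h
  obtain rfl : i = j := eq_of_abs_inner_eq_one ha hinner (by simp [h, hv])
  have : ⟪v i, v i⟫ = -1 := by rw [congrArg (⟪·, v i⟫) h, inner_neg_left]; simp [hv]
  norm_num [hv] at this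

theorem exists_antipodal_code_of_pairwise_abs_inner [Fintype ι] (hv : ∀ i, ‖v i‖ = 1)
    (ha : a < 1) (hinner : Pairwise fun i j => |⟪v i, v j⟫| = a) :
    ∃ Y : Finset E, Y.card = 2 * Fintype.card ι ∧ (∀ y ∈ Y, ‖y‖ = 1) ∧ (∀ y ∈ Y, -y ∈ Y) ∧
      ∀ y ∈ Y, ∀ y' ∈ Y, y ≠ y' → y ≠ -y' → |⟪y, y'⟫| = a := by
  classical
  set X := Finset.univ.image v
  have hmem {y} : y ∈ X ∪ -X ↔ ∃ i, v i = y ∨ -v i = y := by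
    simp only [X, Finset.mem_union, Finset.mem_neg, Finset.mem_image, Finset.mem_univ, true_and,
      exists_exists_eq_and, exists_or]
  refine ⟨X ∪ -X, ?_, ?_, ?_, ?_⟩
  · have hdisj : Disjoint X (-X) := by
      simp only [Finset.disjoint_left, X, Finset.mem_image, Finset.mem_neg]
      rintro _ ⟨i, -, rfl⟩ ⟨_, ⟨j, -, rfl⟩, h⟩
      exact ne_neg_of_pairwise_abs_inner hv ha hinner i j h.symm
    rw [Finset.card_union_of_disjoint hdisj, Finset.card_neg,
      Finset.card_image_of_injective _ (injective_of_pairwise_abs_inner hv ha hinner),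
      Finset.card_univ, two_mul]
  · intro y hy
    obtain ⟨i, rfl | rfl⟩ := hmem.1 hy <;> simp [hv]
  · intro y hy
    obtain ⟨i, rfl | rfl⟩ := hmem.1 hy
    exacts [hmem.2 ⟨i, Or.inr rfl⟩, hmem.2 ⟨i, Or.inl (neg_neg _).symm⟩]
  · intro y hy y' hy' hne hne'
    obtain ⟨i, rfl | rfl⟩ := hmem.1 hy <;> obtain ⟨j, rfl | rfl⟩ := hmem.1 hy' <;>
      obtain rfl | hij := eq_or_ne i j <;> simp_all [inner_neg_left, inner_neg_right, hinner _]

end AntipodalCode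

theorem exists_linearIsometry_euclideanSpace_of_finrank_le {𝕜 E : Type*} [RCLike 𝕜]
    [NormedAddCommGroup E] [InnerProductSpace 𝕜 E] [FiniteDimensional 𝕜 E] {n : ℕ}
    (h : finrank 𝕜 E ≤ n) : Nonempty (E →ₗᵢ[𝕜] EuclideanSpace 𝕜 (Fin n)) := by
  let b := stdOrthonormalBasis 𝕜 E
  let e : Fin (finrank 𝕜 E) → EuclideanSpace 𝕜 (Fin n) :=
    fun i => EuclideanSpace.single (Fin.castLE h i) 1
  have he : Orthonormal 𝕜 e := EuclideanSpace.orthonormal_single.comp _ (Fin.castLE_injective h)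
  have hb : Orthonormal 𝕜 b.toBasis := by rw [b.coe_toBasis]; exact b.orthonormal
  refine ⟨(b.toBasis.constr 𝕜 e).isometryOfOrthonormal hb ?_⟩
  convert he
  ext1 i
  simp

section TracelessSymmetric

variable {n : ℕ}

/-- Matrices live in `EuclideanSpace ℝ (Fin n × Fin n)`, whose inner product is the Frobenius one. -/
def tracelessSymm (n : ℕ) : Submodule ℝ (EuclideanSpace ℝ (Fin n × Fin n)) where
  carrier := {x | (∀ i j, x (i, j) = x (j, i)) ∧ ∑ i, x (i, i) = 0}
  add_mem' := by
    rintro x y ⟨hx, hx'⟩ ⟨hy, hy'⟩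
    refine ⟨fun i j => ?_, ?_⟩
    · simp [hx i j, hy i j]
    · simp [Finset.sum_add_distrib, hx', hy']
  zero_mem' := by simp
  smul_mem' := by
    rintro c x ⟨hx, hx'⟩
    refine ⟨fun i j => ?_, ?_⟩
    · simp [hx i j]
    · simp [← Finset.mul_sum, hx']

theorem eq_zero_of_mem_tracelessSymm {x : EuclideanSpace ℝ (Fin (n + 1) × Fin (n + 1))}
    (hx : x ∈ tracelessSymm (n + 1))
    (hzero : ∀ i j, i ≤ j → (i, j) ≠ (Fin.last n, Fin.last n) → x (i, j) = 0) : x = 0 := by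
  obtain ⟨hsymm, htrace⟩ := hx
  have hdiag (i : Fin n) : x (i.castSucc, i.castSucc) = 0 :=
    hzero _ _ le_rfl (by simp [Fin.castSucc_ne_last])
  have hlast : x (Fin.last n, Fin.last n) = 0 := by
    rwa [Fin.sum_univ_castSucc, Finset.sum_eq_zero fun i _ => hdiag i, zero_add] at htrace
  have hupper i j (hij : i ≤ j) : x (i, j) = 0 := by
    by_cases h : (i, j) = (Fin.last n, Fin.last n)
    · rwa [h]
    · exact hzero i j hij h
  ext ⟨i, j⟩
  rcases le_total i j with hij | hji
  · simpa using hupper i j hij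
  · simpa [hsymm i j] using hupper j i hji

theorem finrank_tracelessSymm_le :
    finrank ℝ (tracelessSymm (n + 1)) ≤
      Fintype.card {p : Fin (n + 1) × Fin (n + 1) // p.1 ≤ p.2 ∧ p ≠ (Fin.last n, Fin.last n)} := by
  let restrict : tracelessSymm (n + 1) →ₗ[ℝ]
      ({p : Fin (n + 1) × Fin (n + 1) // p.1 ≤ p.2 ∧ p ≠ (Fin.last n, Fin.last n)} → ℝ) :=
    { toFun := fun x p => x.1 p.1
      map_add' := fun _ _ => rfl
      map_smul' := fun _ _ => rfl }
  have hinj : Function.Injective restrict := by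
    rw [← LinearMap.ker_eq_bot, LinearMap.ker_eq_bot']
    intro x hx
    exact Subtype.ext <| eq_zero_of_mem_tracelessSymm x.2 fun i j hij hne =>
      congrFun hx ⟨(i, j), hij, hne⟩
  simpa using LinearMap.finrank_le_finrank_of_injective hinj

noncomputable def tracelessOuter (a : EuclideanSpace ℝ (Fin n)) :
    EuclideanSpace ℝ (Fin n × Fin n) :=
  WithLp.toLp 2 fun p => a p.1 * a p.2 - if p.1 = p.2 then ‖a‖ ^ 2 / n else 0

theorem tracelessOuter_mem (a : EuclideanSpace ℝ (Fin n)) :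
    tracelessOuter a ∈ tracelessSymm n := by
  refine ⟨fun i j => ?_, ?_⟩
  · simp [tracelessOuter, mul_comm, eq_comm]
  · rcases eq_or_ne n 0 with rfl | hn
    · simp
    · simp only [tracelessOuter, Finset.sum_sub_distrib, if_true, Finset.sum_const,
        Finset.card_univ, Fintype.card_fin, nsmul_eq_mul, EuclideanSpace.real_norm_sq_eq]
      field_simp
      simp [pow_two]

theorem inner_tracelessOuter (a b : EuclideanSpace ℝ (Fin n)) :
    ⟪tracelessOuter a, tracelessOuter b⟫ = ⟪a, b⟫ ^ 2 - ‖a‖ ^ 2 * ‖b‖ ^ 2 / n := by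
  rcases eq_or_ne n 0 with rfl | hn
  · simp [PiLp.inner_apply]
  have hsq : ⟪a, b⟫ ^ 2 = ∑ i, ∑ j, b i * b j * (a i * a j) := by
    simp only [PiLp.inner_apply, RCLike.inner_apply, conj_trivial, pow_two, Finset.sum_mul_sum,
      mul_mul_mul_comm]
  rw [hsq]
  simp only [tracelessOuter, PiLp.inner_apply, Fintype.sum_prod_type, RCLike.inner_apply,
    conj_trivial, sub_mul, mul_sub, Finset.sum_sub_distrib, mul_ite, ite_mul, mul_zero, zero_mul,
    Finset.sum_ite_eq, Finset.mem_univ, if_true, Finset.sum_const, Finset.card_univ,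
    Fintype.card_fin, nsmul_eq_mul, ← Finset.sum_mul, ← Finset.mul_sum,
    EuclideanSpace.real_norm_sq_eq]
  field_simp
  ring

end TracelessSymmetric

theorem inner_toLp_intCast {n : ℕ} (a b : Fin n → ℤ) :
    ⟪(WithLp.toLp 2 fun i => (a i : ℝ) : EuclideanSpace ℝ (Fin n)),
      WithLp.toLp 2 fun i => (b i : ℝ)⟫ = ((a ⬝ᵥ b : ℤ) : ℝ) := by
  simp [PiLp.inner_apply, dotProduct, mul_comm]

/-- Twice a representative of each of the 120 lines through the roots of `E₈`: the vectors
`2eᵢ ± 2eⱼ` (`i < j`), and the sign vectors with first entry `1` and an even number of `-1`s. -/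
def e8Lines : List (Fin 8 → ℤ) :=
  ((List.finRange 8).flatMap fun i => ((List.finRange 8).filter (i < ·)).flatMap fun j =>
    [fun k => if k = i ∨ k = j then 2 else 0,
      fun k => if k = i then 2 else if k = j then -2 else 0])
  ++ ((List.range 256).map fun m (k : Fin 8) => if m.testBit k then -1 else 1).filter
    fun x => x 0 = 1 ∧ ∏ k, x k = 1

set_option maxRecDepth 100000 in
theorem e8Lines_length : e8Lines.length = 120 := by decide

set_option maxRecDepth 100000 in
theorem dotProduct_self_of_mem_e8Lines : ∀ a ∈ e8Lines, a ⬝ᵥ a = 8 := by decide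

set_option maxRecDepth 100000 in
theorem e8Lines_pairwise_dotProduct :
    e8Lines.Pairwise fun a b => a ⬝ᵥ b ∈ ({-4, 0, 4} : Finset ℤ) := by decide

theorem dotProduct_e8Lines_get_mem {k l : Fin e8Lines.length} (hkl : k ≠ l) :
    e8Lines.get k ⬝ᵥ e8Lines.get l ∈ ({-4, 0, 4} : Finset ℤ) := by
  rcases hkl.lt_or_gt with h | h
  · exact e8Lines_pairwise_dotProduct.rel_get_of_lt h
  · rw [dotProduct_comm]
    exact e8Lines_pairwise_dotProduct.rel_get_of_lt h

noncomputable def e8LineVector (k : Fin e8Lines.length) : EuclideanSpace ℝ (Fin 8 × Fin 8) :=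
  (√56)⁻¹ • tracelessOuter (WithLp.toLp 2 fun i => (e8Lines.get k i : ℝ))

theorem e8LineVector_mem (k : Fin e8Lines.length) : e8LineVector k ∈ tracelessSymm 8 :=
  (tracelessSymm 8).smul_mem _ (tracelessOuter_mem _)

theorem inner_e8LineVector (k l : Fin e8Lines.length) :
    ⟪e8LineVector k, e8LineVector l⟫ =
      (((e8Lines.get k ⬝ᵥ e8Lines.get l : ℤ) : ℝ) ^ 2 - 8) / 56 := by
  have hnorm (k : Fin e8Lines.length) :
      ‖(WithLp.toLp 2 fun i => (e8Lines.get k i : ℝ) : EuclideanSpace ℝ (Fin 8))‖ ^ 2 = 8 := by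
    rw [← real_inner_self_eq_norm_sq, inner_toLp_intCast,
      dotProduct_self_of_mem_e8Lines _ (List.get_mem _ _)]
    norm_num
  rw [e8LineVector, e8LineVector, real_inner_smul_left, real_inner_smul_right,
    inner_tracelessOuter, inner_toLp_intCast, hnorm, hnorm, ← mul_assoc, ← mul_inv,
    Real.mul_self_sqrt (by norm_num)]
  ring

theorem norm_e8LineVector (k : Fin e8Lines.length) : ‖e8LineVector k‖ = 1 := by
  rw [norm_eq_sqrt_real_inner, inner_e8LineVector,
    dotProduct_self_of_mem_e8Lines _ (List.get_mem _ _)]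
  norm_num

theorem abs_inner_e8LineVector {k l : Fin e8Lines.length} (hkl : k ≠ l) :
    |⟪e8LineVector k, e8LineVector l⟫| = 1 / 7 := by
  rw [inner_e8LineVector]
  have h := dotProduct_e8Lines_get_mem hkl
  simp only [Finset.mem_insert, Finset.mem_singleton] at h
  rcases h with h | h | h <;> rw [h] <;> norm_num

theorem exists_antipodal_35_240_code :
    ∃ Y : Finset (EuclideanSpace ℝ (Fin 35)),
      Y.card = 240 ∧
      (∀ y ∈ Y, ‖y‖ = 1) ∧
      (∀ y ∈ Y, -y ∈ Y) ∧
      (∀ y ∈ Y, ∀ y' ∈ Y, y ≠ y' → y ≠ -y' → |⟪y, y'⟫| = 1 / 7) := by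
  have hdim : finrank ℝ (tracelessSymm 8) ≤ 35 := finrank_tracelessSymm_le.trans_eq (by decide)
  obtain ⟨L⟩ := exists_linearIsometry_euclideanSpace_of_finrank_le hdim
  let v (k : Fin e8Lines.length) : EuclideanSpace ℝ (Fin 35) :=
    L ⟨e8LineVector k, e8LineVector_mem k⟩
  obtain ⟨Y, hcard, hY⟩ := exists_antipodal_code_of_pairwise_abs_inner (v := v) (a := 1 / 7)
    (fun k => by simp [v, norm_e8LineVector]) (by norm_num)
    (fun k l hkl => by simp [v, abs_inner_e8LineVector hkl])
  exact ⟨Y, by rw [hcard, Fintype.card_fin, e8Lines_length], hY⟩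
end

section
/- Let Y be an antipodal set of 240 unit vectors in ℝ^35 (closed under negation, all 240 vectors pairwise distinct), and suppose that ⟨y, y'⟩² < 1/49 for all y, y' ∈ Y with y ≠ y' and y ≠ −y'. Then ∑_{y ∈ Y} ∑_{y' ∈ Y} ⟨y, y'⟩² < 240²/35, contradicting the lower bound; hence no such Y exists. -/
open RealInnerProductSpace

private lemma swap4_aux {α β : Type*} [Fintype β] (s : Finset α)
    (f : α → α → β → β → ℝ) :
    ∑ y ∈ s, ∑ y' ∈ s, ∑ a, ∑ b, f y y' a b
      = ∑ a, ∑ b, ∑ y ∈ s, ∑ y' ∈ s, f y y' a b := by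
  calc ∑ y ∈ s, ∑ y' ∈ s, ∑ a, ∑ b, f y y' a b
      = ∑ y ∈ s, ∑ a, ∑ y' ∈ s, ∑ b, f y y' a b :=
        Finset.sum_congr rfl fun y _ => Finset.sum_comm
    _ = ∑ a, ∑ y ∈ s, ∑ y' ∈ s, ∑ b, f y y' a b := Finset.sum_comm
    _ = ∑ a, ∑ y ∈ s, ∑ b, ∑ y' ∈ s, f y y' a b :=
        Finset.sum_congr rfl fun a _ => Finset.sum_congr rfl fun y _ => Finset.sum_comm
    _ = ∑ a, ∑ b, ∑ y ∈ s, ∑ y' ∈ s, f y y' a b :=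
        Finset.sum_congr rfl fun a _ => Finset.sum_comm

theorem no_antipodal_240_code_below_one_seventh
    (Y : Finset (EuclideanSpace ℝ (Fin 35)))
    (hcard : Y.card = 240)
    (hunit : ∀ y ∈ Y, ‖y‖ = 1)
    (hanti : ∀ y ∈ Y, -y ∈ Y)
    (hinner : ∀ y ∈ Y, ∀ y' ∈ Y, y ≠ y' → y ≠ -y' → ⟪y, y'⟫ ^ 2 < 1 / 49) :
    (∑ y ∈ Y, ∑ y' ∈ Y, ⟪y, y'⟫ ^ 2 < (240 : ℝ) ^ 2 / 35) ∧ False := by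
  classical
  have hip : ∀ x y : EuclideanSpace ℝ (Fin 35), ⟪x, y⟫ = ∑ a, x a * y a := by
    intro x y
    simp [PiLp.inner_apply, RCLike.inner_apply, mul_comm]
  -- lower bound
  have key : ∑ y ∈ Y, ∑ y' ∈ Y, ⟪y, y'⟫ ^ 2
      = ∑ a : Fin 35, ∑ b : Fin 35, (∑ y ∈ Y, y a * y b) ^ 2 := by
    calc ∑ y ∈ Y, ∑ y' ∈ Y, ⟪y, y'⟫ ^ 2
        = ∑ y ∈ Y, ∑ y' ∈ Y, ∑ a : Fin 35, ∑ b : Fin 35,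
            (y a * y b) * (y' a * y' b) := by
          refine Finset.sum_congr rfl fun y _ => Finset.sum_congr rfl fun y' _ => ?_
          rw [hip, sq, Finset.sum_mul_sum]
          exact Finset.sum_congr rfl fun a _ => Finset.sum_congr rfl fun b _ => by ring
      _ = ∑ a : Fin 35, ∑ b : Fin 35, ∑ y ∈ Y, ∑ y' ∈ Y,
            (y a * y b) * (y' a * y' b) := swap4_aux Y _
      _ = ∑ a : Fin 35, ∑ b : Fin 35, (∑ y ∈ Y, y a * y b) ^ 2 := by
          refine Finset.sum_congr rfl fun a _ => Finset.sum_congr rfl fun b _ => ?_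
          rw [sq, Finset.sum_mul_sum]
  have trace : ∑ a : Fin 35, (∑ y ∈ Y, y a * y a) = 240 := by
    rw [Finset.sum_comm]
    have : ∀ y ∈ Y, ∑ a : Fin 35, y a * y a = 1 := by
      intro y hy
      have := hip y y
      rw [real_inner_self_eq_norm_sq, hunit y hy] at this
      simpa using this.symm
    rw [Finset.sum_congr rfl this, Finset.sum_const, hcard]
    norm_num
  have lower : (240 : ℝ) ^ 2 / 35 ≤ ∑ y ∈ Y, ∑ y' ∈ Y, ⟪y, y'⟫ ^ 2 := by
    have cs : ((240 : ℝ)) ^ 2 ≤ 35 * ∑ a : Fin 35, (∑ y ∈ Y, y a * y a) ^ 2 := by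
      have := sq_sum_le_card_mul_sum_sq
        (s := (Finset.univ : Finset (Fin 35))) (f := fun a => ∑ y ∈ Y, y a * y a)
      rw [trace] at this
      simpa using this
    have diag : ∑ a : Fin 35, (∑ y ∈ Y, y a * y a) ^ 2
        ≤ ∑ a : Fin 35, ∑ b : Fin 35, (∑ y ∈ Y, y a * y b) ^ 2 := by
      refine Finset.sum_le_sum fun a _ => ?_
      exact Finset.single_le_sum (f := fun b => (∑ y ∈ Y, y a * y b) ^ 2)
        (fun b _ => sq_nonneg _) (Finset.mem_univ a)
    rw [key]
    nlinarith [diag, cs]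
  -- upper bound
  have hY : Y.Nonempty := by rw [← Finset.card_pos, hcard]; norm_num
  have h1 : ∀ y ∈ Y, ∑ y' ∈ Y, ⟪y, y'⟫ ^ 2 < 336 / 49 := by
    intro y hy
    have hyn : ‖y‖ = 1 := hunit y hy
    have hy0 : y ≠ 0 := by
      intro h; rw [h, norm_zero] at hyn; norm_num at hyn
    have hne : -y ≠ y := by
      intro h
      apply hy0
      have h2 : (2 : ℝ) • y = 0 := by
        rw [two_smul]; nth_rw 1 [← h]; simp
      simpa using (smul_eq_zero.mp h2).resolve_left (by norm_num)
    have hmem : -y ∈ Y.erase y := Finset.mem_erase.mpr ⟨hne, hanti y hy⟩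
    have hScard : ((Y.erase y).erase (-y)).card = 238 := by
      rw [Finset.card_erase_of_mem hmem, Finset.card_erase_of_mem hy, hcard]
    have hSne : ((Y.erase y).erase (-y)).Nonempty := by
      rw [← Finset.card_pos, hScard]; norm_num
    have e1 : ⟪y, y⟫ ^ 2 = 1 := by
      rw [real_inner_self_eq_norm_sq, hyn]; norm_num
    have e2 : ⟪y, -y⟫ ^ 2 = 1 := by
      rw [inner_neg_right, real_inner_self_eq_norm_sq, hyn]; norm_num
    have hsplit : ∑ y' ∈ Y, ⟪y, y'⟫ ^ 2
        = ⟪y, y⟫ ^ 2 + (⟪y, -y⟫ ^ 2 + ∑ y' ∈ (Y.erase y).erase (-y), ⟪y, y'⟫ ^ 2) := by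
      rw [← Finset.add_sum_erase Y _ hy, ← Finset.add_sum_erase _ _ hmem]
    have hlt : ∑ y' ∈ (Y.erase y).erase (-y), ⟪y, y'⟫ ^ 2
        < ∑ _y' ∈ (Y.erase y).erase (-y), (1 / 49 : ℝ) := by
      refine Finset.sum_lt_sum_of_nonempty hSne fun y' hy' => ?_
      have h1' := Finset.mem_erase.mp hy'
      have h2' := Finset.mem_erase.mp h1'.2
      refine hinner y hy y' h2'.2 (Ne.symm h2'.1) fun h => ?_
      exact h1'.1 (by rw [h]; simp)
    rw [Finset.sum_const, hScard] at hlt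
    rw [hsplit, e1, e2]
    have h238 : (238 : ℕ) • (1 / 49 : ℝ) = 238 / 49 := by norm_num
    rw [h238] at hlt
    linarith
  have upper : ∑ y ∈ Y, ∑ y' ∈ Y, ⟪y, y'⟫ ^ 2 < (240 : ℝ) ^ 2 / 35 := by
    calc ∑ y ∈ Y, ∑ y' ∈ Y, ⟪y, y'⟫ ^ 2
        < ∑ _y ∈ Y, (336 / 49 : ℝ) := Finset.sum_lt_sum_of_nonempty hY h1
      _ = (240 : ℝ) ^ 2 / 35 := by rw [Finset.sum_const, hcard]; norm_num
  exact ⟨upper, absurd lower (not_le.mpr upper)⟩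
end
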